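/- For all integers n ≥ 0 and k ≥ 1, the product {kn+1}·{n}!·{kn}! divides {(k+1)n}! in Z[s,t], and the quotient, i.e. the Lucas-Fuss-Catalan polynomial C_{n,k} = (1/{kn+1})·{(k+1)n choose n}_L, is a polynomial in s and t all of whose coefficients are nonnegative integers. -/

import Mathlib

/-!
The addition formula `{a+b+1} = {a+1}{b+1} + t{a}{b}` drives everything. It gives a Pascal-type
recurrence for the Lucasnomials with coefficients in `ℕ[s,t]`, and it shows that `{n}` divides
`{kn}` in `ℕ[s,t]`. Splitting `{(k+1)n} = {kn+1}{n} + t{kn}{n-1}` inside `{(k+1)n}!` then gives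
`C_{n,k} = {(k+1)n-1 choose n-1} + t ({kn}/{n}) {(k+1)n-1 choose n-2}`.
-/

open MvPolynomial Finset

noncomputable section

/-- Polynomial ring ℤ[s,t] with s = X 0, t = X 1. -/
abbrev P2 : Type := MvPolynomial (Fin 2) ℤ

def ps : P2 := X 0
def pt : P2 := X 1

/-- The Lucas sequence of polynomials: {0}=0, {1}=1, {n}=s{n-1}+t{n-2}. -/
def lucas : ℕ → P2
  | 0 => 0
  | 1 => 1
  | (n+2) => ps * lucas (n+1) + pt * lucas n

/-- The Lucastorial {n}! = {1}{2}⋯{n}. -/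
def lucasFact (n : ℕ) : P2 := ∏ i ∈ Finset.range n, lucas (i+1)

/-- The d-divisible Lucastorial {n:d}! = {d}{2d}⋯{nd}. -/
def lucasFactD (d n : ℕ) : P2 := ∏ i ∈ Finset.range n, lucas (d*(i+1))

/-- A polynomial lies in ℕ[s,t]: all coefficients are nonnegative. -/
def Nonneg (p : P2) : Prop := ∀ m, 0 ≤ p.coeff m

/-- The fraction field ℤ(s,t). -/
abbrev K : Type := FractionRing P2

def φ : P2 →+* K := algebraMap P2 K

def L (n : ℕ) : K := φ (lucas n)

def LFact (n : ℕ) : K := φ (lucasFact n)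

def LFactD (d n : ℕ) : K := φ (lucasFactD d n)

/-- The Lucasnomial {n choose k}, as an element of the fraction field. -/
def lnom (n k : ℕ) : K := LFact n / (LFact k * LFact (n-k))

/-- The d-divisible Lucasnomial {n:d choose k:d}, as an element of the fraction field. -/
def lnomD (d n k : ℕ) : K := LFactD d n / (LFactD d k * LFactD d (n-k))

/-- The Lucas-Catalan number C_{n} = (1/{n+1}) {2n choose n}. -/
def catL (n : ℕ) : K := lnom (2*n) n / L (n+1)

/-- The Lucas-Fuss-Catalan number C_{n,k} = (1/{kn+1}) {(k+1)n choose n}. -/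
def fussCatL (n k : ℕ) : K := lnom ((k+1)*n) n / L (k*n+1)

namespace MvPolynomial

variable (σ R : Type*) [CommSemiring R] [PartialOrder R] [IsOrderedRing R]

def nonnegCoeffs : Subsemiring (MvPolynomial σ R) where
  carrier := {p | ∀ m, 0 ≤ p.coeff m}
  zero_mem' _ := by simp
  one_mem' m := by classical rw [coeff_one]; split <;> simp
  add_mem' hp hq m := by rw [coeff_add]; exact add_nonneg (hp m) (hq m)
  mul_mem' hp hq m := by
    classical rw [coeff_mul]; exact sum_nonneg fun x _ ↦ mul_nonneg (hp _) (hq _)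

variable {σ R}

theorem X_mem_nonnegCoeffs (i : σ) : X i ∈ nonnegCoeffs σ R := by
  classical intro m; rw [coeff_X]; split <;> simp

end MvPolynomial

def NonnegDvd (a b : P2) : Prop := ∃ q ∈ nonnegCoeffs (Fin 2) ℤ, b = q * a

theorem lucas_add_two (n : ℕ) : lucas (n + 2) = ps * lucas (n + 1) + pt * lucas n := rfl

theorem lucas_mem_nonnegCoeffs : ∀ n, lucas n ∈ nonnegCoeffs (Fin 2) ℤ
  | 0 => zero_mem _
  | 1 => one_mem _
  | n + 2 => by
    rw [lucas_add_two]
    exact add_mem (mul_mem (X_mem_nonnegCoeffs 0) (lucas_mem_nonnegCoeffs (n + 1)))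
      (mul_mem (X_mem_nonnegCoeffs 1) (lucas_mem_nonnegCoeffs n))

theorem lucas_add_add_one (a : ℕ) :
    ∀ b, lucas (a + b + 1) = lucas (a + 1) * lucas (b + 1) + pt * lucas a * lucas b
  | 0 => by simp [lucas]
  | 1 => show lucas (a + 2) = lucas (a + 1) * lucas 2 + pt * lucas a * lucas 1 by
    rw [lucas_add_two a]; simp [lucas]; ring
  | b + 2 => by
    have h₁ : lucas (a + (b + 2) + 1) = ps * lucas (a + (b + 1) + 1) + pt * lucas (a + b + 1) :=
      rfl
    have h₂ : lucas (b + 2 + 1) = ps * lucas (b + 2) + pt * lucas (b + 1) := rfl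
    rw [h₁, h₂, lucas_add_add_one a b, lucas_add_add_one a (b + 1), lucas_add_two b]
    ring

theorem lucasFact_succ (n : ℕ) : lucasFact (n + 1) = lucasFact n * lucas (n + 1) :=
  prod_range_succ _ _

/-- `lucasBinom a b` is the Lucasnomial `{a + b choose a}`. -/
def lucasBinom : ℕ → ℕ → P2
  | 0, _ => 1
  | _, 0 => 1
  | a + 1, b + 1 => lucas (b + 2) * lucasBinom a (b + 1) + pt * lucas a * lucasBinom (a + 1) b

@[simp]
theorem lucasBinom_zero_left (b : ℕ) : lucasBinom 0 b = 1 := by rw [lucasBinom]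

@[simp]
theorem lucasBinom_zero_right (a : ℕ) : lucasBinom a 0 = 1 := by cases a <;> simp [lucasBinom]

theorem lucasBinom_mem_nonnegCoeffs (a b : ℕ) : lucasBinom a b ∈ nonnegCoeffs (Fin 2) ℤ := by
  induction a, b using lucasBinom.induct with
  | case1 | case2 => simp [one_mem]
  | case3 a b ih₁ ih₂ =>
    rw [lucasBinom]
    exact add_mem (mul_mem (lucas_mem_nonnegCoeffs _) ih₁)
      (mul_mem (mul_mem (X_mem_nonnegCoeffs 1) (lucas_mem_nonnegCoeffs _)) ih₂)

theorem lucasFact_add (a b : ℕ) :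
    lucasFact (a + b) = lucasBinom a b * lucasFact a * lucasFact b := by
  induction a, b using lucasBinom.induct with
  | case1 | case2 => simp [lucasFact]
  | case3 a b ih₁ ih₂ =>
    rw [show a + 1 + b = a + (b + 1) by ring, lucasFact_succ a] at ih₂
    rw [lucasFact_succ b] at ih₁
    rw [show a + 1 + (b + 1) = a + (b + 1) + 1 by ring, lucasFact_succ, lucas_add_add_one,
      lucasBinom, lucasFact_succ a, lucasFact_succ b]
    linear_combination (lucas (a + 1) * lucas (b + 1 + 1)) * ih₁
      + (pt * lucas a * lucas (b + 1)) * ih₂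

theorem lucas_nonnegDvd_lucas_mul (m n : ℕ) : NonnegDvd (lucas n) (lucas (m * n)) := by
  rcases n with _ | n
  · exact ⟨0, zero_mem _, by simp [lucas]⟩
  induction m with
  | zero => exact ⟨0, zero_mem _, by simp [lucas]⟩
  | succ m ih =>
    obtain ⟨q, hq, h⟩ := ih
    refine ⟨lucas (m * (n + 1) + 1) + pt * q * lucas n, ?_, ?_⟩
    · exact add_mem (lucas_mem_nonnegCoeffs _)
        (mul_mem (mul_mem (X_mem_nonnegCoeffs 1) hq) (lucas_mem_nonnegCoeffs n))
    · rw [show (m + 1) * (n + 1) = m * (n + 1) + n + 1 by ring, lucas_add_add_one, h]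
      ring

theorem nonnegDvd_lucasFact_add {c n : ℕ} (h : NonnegDvd (lucas (n + 1)) (lucas c)) :
    NonnegDvd (lucas (c + 1) * lucasFact (n + 1) * lucasFact c) (lucasFact (c + n + 1)) := by
  obtain ⟨q, hq, hc⟩ := h
  rcases n with _ | m
  · exact ⟨1, one_mem _, by rw [lucasFact_succ]; simp [lucasFact, lucas]; ring⟩
  -- `{c+m+2} = {c+1}{m+2} + t{c}{m+1}` and `{c} = q{m+2}` split the quotient in two
  refine ⟨lucasBinom (m + 1) c + pt * q * lucasBinom m (c + 1), ?_, ?_⟩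
  · exact add_mem (lucasBinom_mem_nonnegCoeffs _ _)
      (mul_mem (mul_mem (X_mem_nonnegCoeffs 1) hq) (lucasBinom_mem_nonnegCoeffs _ _))
  have h₁ := lucasFact_add (m + 1) c
  have h₂ := lucasFact_add m (c + 1)
  rw [show m + 1 + c = c + m + 1 by ring] at h₁
  rw [show m + (c + 1) = c + m + 1 by ring, lucasFact_succ c] at h₂
  rw [lucasFact_succ, lucas_add_add_one, lucasFact_succ (m + 1)]
  rw [lucasFact_succ m] at h₁ ⊢
  linear_combination (lucas (c + 1) * lucas (m + 1 + 1)) * h₁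
    + (pt * lucas c * lucas (m + 1)) * h₂
    + (pt * lucas (m + 1) * lucasBinom m (c + 1) * lucasFact m * lucasFact c * lucas (c + 1)) * hc

theorem lucasFussCatalan_nonneg_general (n k : ℕ) :
    ∃ p : P2, Nonneg p ∧
      lucasFact ((k+1)*n) = p * (lucas (k*n+1) * lucasFact n * lucasFact (k*n)) := by
  rcases n with _ | n
  · exact ⟨1, one_mem (nonnegCoeffs (Fin 2) ℤ), by simp [lucasFact, lucas]⟩
  rw [show (k + 1) * (n + 1) = k * (n + 1) + n + 1 by ring]
  exact nonnegDvd_lucasFact_add (lucas_nonnegDvd_lucas_mul k (n + 1))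

/-- {kn+1}{n}!{kn}! divides {(k+1)n}! with quotient (the
Lucas-Fuss-Catalan polynomial) in ℕ[s,t]. -/
theorem lucasFussCatalan_nonneg (n k : ℕ) (hk : 1 ≤ k) :
    ∃ p : P2, Nonneg p ∧
      lucasFact ((k+1)*n) = p * (lucas (k*n+1) * lucasFact n * lucasFact (k*n)) :=
  lucasFussCatalan_nonneg_general n k
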